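/- arXiv:2602.18656 — 2 statements merged into one kernel-verified Lean document; each statement's English description precedes it below -/
import Mathlib

section
/- Let α ∈ [0,1], let φ be a size-α test based on T with cutoff k and randomization constant γ, and let ψ be a minimally discrete size-α test based on R, where R is injective and agrees with T, and assume p₀(x) > 0 for every x ∈ 𝒳. Then the conditional expectation of ψ given T(X) equals φ: (i) ψ(x) = 1 whenever T(x) > k, (ii) ψ(x) = 0 whenever T(x) < k, and (iii) Σ_{x : T(x) = k} ψ(x)p₀(x) = γ·Pr₀{T(X) = k}. -/
/-!
Since `R` agrees with `T`, every point ranked at or before `x` has `T ≥ T x`. If `T x > k` but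
`ψ x < 1`, then `k* ≤ R x`, so `ψ` vanishes beyond `x` while `φ = 1` up to `x`: hence `ψ ≤ φ`,
strictly at `x`, and as `p₀ x > 0` the size of `ψ` is strictly smaller than that of `φ`, which
contradicts both sizes being `α`. The case `T x < k`, `ψ x > 0` is symmetric. So `ψ = φ` off
`{T = k}`, and equality of sizes leaves `Σ_{T = k} ψ p₀ = Σ_{T = k} φ p₀ = γ Pr₀{T = k}`.
-/

open Set

section

variable {𝒳 : Type*}

lemma summable_mul_of_mem_Icc {p f : 𝒳 → ℝ} (hp : Summable p) (hp_nonneg : ∀ x, 0 ≤ p x)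
    (hf : ∀ x, f x ∈ Icc (0 : ℝ) 1) : Summable fun x => f x * p x :=
  hp.of_nonneg_of_le (fun x => mul_nonneg (hf x).1 (hp_nonneg x))
    (fun x => mul_le_of_le_one_left (hp_nonneg x) (hf x).2)

lemma tsum_mul_lt_tsum_mul {p f g : 𝒳 → ℝ} (hp : Summable p) (hp_nonneg : ∀ x, 0 ≤ p x)
    (hf : ∀ x, f x ∈ Icc (0 : ℝ) 1) (hg : ∀ x, g x ∈ Icc (0 : ℝ) 1) (hfg : ∀ x, f x ≤ g x)
    {x : 𝒳} (hpx : 0 < p x) (hx : f x < g x) :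
    ∑' y, f y * p y < ∑' y, g y * p y :=
  Summable.tsum_lt_tsum (fun y => mul_le_mul_of_nonneg_right (hfg y) (hp_nonneg y))
    (mul_lt_mul_of_pos_right hx hpx)
    (summable_mul_of_mem_Icc hp hp_nonneg hf) (summable_mul_of_mem_Icc hp hp_nonneg hg)

variable {p₀ T φ ψ : 𝒳 → ℝ} {R : 𝒳 → ℕ} {k : ℝ} {kstar : ℕ}

lemma le_of_rank_le (hagree : ∀ x y, T x > T y → R x < R y) {x y : 𝒳} (h : R y ≤ R x) :
    T x ≤ T y :=
  le_of_not_gt fun hlt => (hagree x y hlt).not_ge h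

lemma eq_one_of_gt_cutoff (hp : Summable p₀) (hp_pos : ∀ x, 0 < p₀ x)
    (hagree : ∀ x y, T x > T y → R x < R y)
    (hφ01 : ∀ x, φ x ∈ Icc (0 : ℝ) 1) (hψ01 : ∀ x, ψ x ∈ Icc (0 : ℝ) 1)
    (hφ1 : ∀ x, T x > k → φ x = 1)
    (hψ1 : ∀ x, R x < kstar → ψ x = 1) (hψ3 : ∀ x, R x > kstar → ψ x = 0)
    (hsize : ∑' x, ψ x * p₀ x = ∑' x, φ x * p₀ x) {x : 𝒳} (hx : T x > k) : ψ x = 1 := by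
  by_contra hne
  have hkstar : kstar ≤ R x := le_of_not_gt fun h => hne (hψ1 x h)
  have hle : ∀ y, ψ y ≤ φ y := by
    intro y
    rcases le_or_gt (R y) (R x) with h | h
    · rw [hφ1 y (hx.trans_le (le_of_rank_le hagree h))]
      exact (hψ01 y).2
    · rw [hψ3 y (hkstar.trans_lt h)]
      exact (hφ01 y).1
  have hlt : ψ x < φ x := by
    rw [hφ1 x hx]
    exact lt_of_le_of_ne (hψ01 x).2 hne
  exact (tsum_mul_lt_tsum_mul hp (fun y => (hp_pos y).le) hψ01 hφ01 hle (hp_pos x) hlt).ne hsize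

lemma eq_zero_of_lt_cutoff (hp : Summable p₀) (hp_pos : ∀ x, 0 < p₀ x)
    (hagree : ∀ x y, T x > T y → R x < R y)
    (hφ01 : ∀ x, φ x ∈ Icc (0 : ℝ) 1) (hψ01 : ∀ x, ψ x ∈ Icc (0 : ℝ) 1)
    (hφ3 : ∀ x, T x < k → φ x = 0)
    (hψ1 : ∀ x, R x < kstar → ψ x = 1) (hψ3 : ∀ x, R x > kstar → ψ x = 0)
    (hsize : ∑' x, ψ x * p₀ x = ∑' x, φ x * p₀ x) {x : 𝒳} (hx : T x < k) : ψ x = 0 := by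
  by_contra hne
  have hkstar : R x ≤ kstar := le_of_not_gt fun h => hne (hψ3 x h)
  have hle : ∀ y, φ y ≤ ψ y := by
    intro y
    rcases lt_or_ge (R y) (R x) with h | h
    · rw [hψ1 y (h.trans_le hkstar)]
      exact (hφ01 y).2
    · rw [hφ3 y ((le_of_rank_le hagree h).trans_lt hx)]
      exact (hψ01 y).1
  have hlt : φ x < ψ x := by
    rw [hφ3 x hx]
    exact lt_of_le_of_ne (hψ01 x).1 (Ne.symm hne)
  exact (tsum_mul_lt_tsum_mul hp (fun y => (hp_pos y).le) hφ01 hψ01 hle (hp_pos x) hlt).ne' hsize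

lemma tsum_ite_mul_eq_of_eq_off {γ : ℝ} (hp : Summable p₀)
    (hφ : Summable fun x => φ x * p₀ x) (hψ : Summable fun x => ψ x * p₀ x)
    (hφ2 : ∀ x, T x = k → φ x = γ) (hoff : ∀ x, T x ≠ k → ψ x = φ x)
    (hsize : ∑' x, ψ x * p₀ x = ∑' x, φ x * p₀ x) :
    (∑' x, if T x = k then ψ x * p₀ x else 0) = γ * ∑' x, if T x = k then p₀ x else 0 := by
  have hsplit : ∀ x, (if T x = k then ψ x * p₀ x else 0)
      = (ψ x * p₀ x - φ x * p₀ x) + γ * (if T x = k then p₀ x else 0) := by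
    intro x
    split_ifs with h
    · rw [hφ2 x h]; ring
    · rw [hoff x h]; ring
  have hlevel : Summable fun x => if T x = k then p₀ x else 0 := by
    refine (hp.indicator {x | T x = k}).congr fun x => ?_
    simp [indicator_apply]
  rw [tsum_congr hsplit, (hψ.sub hφ).tsum_add (hlevel.mul_left γ), hψ.tsum_sub hφ, hsize,
    sub_self, zero_add, tsum_mul_left]

end

theorem stmt_10_general {𝒳 : Type*}
    (p₀ : 𝒳 → ℝ) (hp₀pos : ∀ x, 0 < p₀ x) (hp₀sum : ∑' x, p₀ x = 1)
    (T : 𝒳 → ℝ) (R : 𝒳 → ℕ)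
    (hagree : ∀ x y, T x > T y → R x < R y)
    (α : ℝ)
    (φ : 𝒳 → ℝ) (hφ01 : ∀ x, φ x ∈ Set.Icc (0:ℝ) 1)
    (k : ℝ) (γ : ℝ)
    (hφ1 : ∀ x, T x > k → φ x = 1) (hφ2 : ∀ x, T x = k → φ x = γ)
    (hφ3 : ∀ x, T x < k → φ x = 0) (hφα : ∑' x, φ x * p₀ x = α)
    (ψ : 𝒳 → ℝ) (hψ01 : ∀ x, ψ x ∈ Set.Icc (0:ℝ) 1)
    (kstar : ℕ)
    (hψ1 : ∀ x, R x < kstar → ψ x = 1)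
    (hψ3 : ∀ x, R x > kstar → ψ x = 0) (hψα : ∑' x, ψ x * p₀ x = α) :
    (∀ x, T x > k → ψ x = 1) ∧ (∀ x, T x < k → ψ x = 0)
      ∧ (∑' x, if T x = k then ψ x * p₀ x else 0)
          = γ * ∑' x, if T x = k then p₀ x else 0 := by
  have hp : Summable p₀ := by
    by_contra h
    simp [tsum_eq_zero_of_not_summable h] at hp₀sum
  have hsize : ∑' x, ψ x * p₀ x = ∑' x, φ x * p₀ x := hψα.trans hφα.symm
  have hone : ∀ x, T x > k → ψ x = 1 := fun _ =>
    eq_one_of_gt_cutoff hp hp₀pos hagree hφ01 hψ01 hφ1 hψ1 hψ3 hsize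
  have hzero : ∀ x, T x < k → ψ x = 0 := fun _ =>
    eq_zero_of_lt_cutoff hp hp₀pos hagree hφ01 hψ01 hφ3 hψ1 hψ3 hsize
  have hoff : ∀ x, T x ≠ k → ψ x = φ x := by
    intro x hx
    rcases hx.lt_or_gt with hlt | hgt
    · rw [hzero x hlt, hφ3 x hlt]
    · rw [hone x hgt, hφ1 x hgt]
  have hnonneg : ∀ x, 0 ≤ p₀ x := fun x => (hp₀pos x).le
  exact ⟨hone, hzero, tsum_ite_mul_eq_of_eq_off hp (summable_mul_of_mem_Icc hp hnonneg hφ01)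
    (summable_mul_of_mem_Icc hp hnonneg hψ01) hφ2 hoff hsize⟩

/-- If `φ` is a size-α test based on `T` (cutoff `k`,
randomization constant `γ`) and `ψ` an MD size-α test based on `R` (injective,
agreeing with `T`), with `p₀ > 0` everywhere, then the conditional expectation
of `ψ` given `T(X)` equals `φ`: (i) `ψ(x) = 1` when `T(x) > k`, (ii) `ψ(x) = 0`
when `T(x) < k`, and (iii) `Σ_{x : T(x)=k} ψ(x)p₀(x) = γ·Pr₀{T(X) = k}`. -/
theorem stmt_10 {𝒳 : Type*} [Countable 𝒳]
    (p₀ : 𝒳 → ℝ) (hp₀pos : ∀ x, 0 < p₀ x) (hp₀sum : ∑' x, p₀ x = 1)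
    (T : 𝒳 → ℝ) (R : 𝒳 → ℕ) (hRinj : Function.Injective R)
    (hagree : ∀ x y, T x > T y → R x < R y)
    (α : ℝ) (hα : α ∈ Set.Icc (0:ℝ) 1)
    (φ : 𝒳 → ℝ) (hφ01 : ∀ x, φ x ∈ Set.Icc (0:ℝ) 1)
    (k : ℝ) (γ : ℝ) (hγ : γ ∈ Set.Icc (0:ℝ) 1)
    (hφ1 : ∀ x, T x > k → φ x = 1) (hφ2 : ∀ x, T x = k → φ x = γ)
    (hφ3 : ∀ x, T x < k → φ x = 0) (hφα : ∑' x, φ x * p₀ x = α)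
    (ψ : 𝒳 → ℝ) (hψ01 : ∀ x, ψ x ∈ Set.Icc (0:ℝ) 1)
    (kstar : ℕ) (γstar : ℝ) (hγstar : γstar ∈ Set.Icc (0:ℝ) 1)
    (hψ1 : ∀ x, R x < kstar → ψ x = 1) (hψ2 : ∀ x, R x = kstar → ψ x = γstar)
    (hψ3 : ∀ x, R x > kstar → ψ x = 0) (hψα : ∑' x, ψ x * p₀ x = α) :
    (∀ x, T x > k → ψ x = 1) ∧ (∀ x, T x < k → ψ x = 0)
      ∧ (∑' x, if T x = k then ψ x * p₀ x else 0)
          = γ * ∑' x, if T x = k then p₀ x else 0 :=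
  stmt_10_general p₀ hp₀pos hp₀sum T R hagree α φ hφ01 k γ hφ1 hφ2 hφ3 hφα ψ hψ01 kstar hψ1 hψ3 hψα
end

section
/- Assume R is injective and agrees with T, p₀(x) > 0 for every x ∈ 𝒳, and T is sufficient for the family. Then for every convex function h : [0,1] → ℝ, Σ_x h(Q^T(x))p₀(x) ≤ Σ_x h(Q^{MD}(x))p₀(x) ≤ ∫₀¹ h(u) du; that is, under the null distribution the mid-p-value based on T is dominated in the convex order by the MD mid-p-value, which in turn is dominated in the convex order by a uniform random variable. -/
/-!
Both p-values are mid-p-values `Pr₀{U > U x} + ½ Pr₀{U = U x}`, for the statistic `U = T` and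
for `U = -R`, and `-R` refines the order of `T`. On a level set of `T` the difference
`Q^MD(x) - Q^T(x)` is half the null mass of the points of that level set ranked above `x` by `-R`
minus that of the points ranked below; weighted by `p₀ x · g (T x)` it sums to zero, because each
pair of points of a level set is counted once with each sign. Taking for `g` the right derivative
of `h` at `Q^T` (which exists as `p₀ > 0` keeps mid-p-values in `(0, 1)`), the supporting-line
inequality `h(Q^MD) ≥ h(Q^T) + g · (Q^MD - Q^T)` sums to the first inequality.
For the second, `Q^MD(x)` is the midpoint of `(C x, C x + p₀ x]`, `C x = Pr₀{R < R x}`; these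
intervals tile `(0, 1]`, and on each of them `h (midpoint) · length ≤ ∫ h` (Hermite–Hadamard).
-/

open Function MeasureTheory Set

namespace ConvexOn

variable {f : ℝ → ℝ} {S : Set ℝ} {a b x y : ℝ}

lemma add_rightDeriv_mul_sub_le (hf : ConvexOn ℝ S f) (hx : x ∈ interior S) (hy : y ∈ S) :
    f x + derivWithin f (Ioi x) x * (y - x) ≤ f y := by
  rcases lt_trichotomy y x with hyx | rfl | hxy
  · have hslope : slope f y x ≤ derivWithin f (Ioi x) x :=
      (hf.slope_le_leftDeriv_of_mem_interior hy hx hyx).trans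
        (hf.leftDeriv_le_rightDeriv_of_mem_interior hx)
    rw [slope_def_field, div_le_iff₀ (sub_pos.2 hyx)] at hslope
    linarith
  · simp
  · have hslope := hf.rightDeriv_le_slope_of_mem_interior hx hy hxy
    rw [slope_def_field, le_div_iff₀ (sub_pos.2 hxy)] at hslope
    linarith

lemma exists_forall_abs_le (hf : ConvexOn ℝ (Icc a b) f) : ∃ M, ∀ x ∈ Icc a b, |f x| ≤ M := by
  rcases lt_or_ge b a with hba | hab
  · exact ⟨0, fun x hx => absurd (hx.1.trans hx.2) (not_le.2 hba)⟩
  have hmax : ∀ x ∈ Icc a b, f x ≤ max (f a) (f b) := fun x hx =>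
    hf.le_on_segment (left_mem_Icc.2 hab) (right_mem_Icc.2 hab) (by rwa [segment_eq_Icc hab])
  refine ⟨max |2 * f ((a + b) / 2) - max (f a) (f b)| |max (f a) (f b)|,
    fun x hx => abs_le_max_abs_abs ?_ (hmax x hx)⟩
  -- `(a + b) / 2` is the midpoint of `x` and its reflection `a + b - x`
  have hx' : a + b - x ∈ Icc a b := ⟨by linarith [hx.2], by linarith [hx.1]⟩
  have hmid := hf.2 hx hx' (by norm_num : (0:ℝ) ≤ 1 / 2) (by norm_num : (0:ℝ) ≤ 1 / 2)
    (by norm_num)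
  simp only [smul_eq_mul] at hmid
  rw [show 1 / 2 * x + 1 / 2 * (a + b - x) = (a + b) / 2 by ring] at hmid
  linarith [hmax _ hx']

lemma integrableOn_Icc (hf : ConvexOn ℝ (Icc a b) f) : IntegrableOn f (Icc a b) := by
  obtain ⟨M, hM⟩ := hf.exists_forall_abs_le
  have hcont : ContinuousOn f (Ioo a b) :=
    (hf.subset Ioo_subset_Icc_self (convex_Ioo a b)).continuousOn isOpen_Ioo
  rw [integrableOn_Icc_iff_integrableOn_Ioo]
  exact .of_bound measure_Ioo_lt_top (hcont.aestronglyMeasurable measurableSet_Ioo) M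
    ((ae_restrict_iff' measurableSet_Ioo).2 (ae_of_all _ fun u hu =>
      hM u (Ioo_subset_Icc_self hu)))

lemma summable_map_mul {ι : Type*} {v w : ι → ℝ} (hf : ConvexOn ℝ (Icc a b) f)
    (hv : ∀ i, v i ∈ Icc a b) (hw : ∀ i, 0 ≤ w i) (hws : Summable w) :
    Summable fun i => f (v i) * w i := by
  obtain ⟨M, hM⟩ := hf.exists_forall_abs_le
  refine Summable.of_norm_bounded (hws.mul_left M) fun i => ?_
  rw [norm_mul, Real.norm_eq_abs, Real.norm_eq_abs, abs_of_nonneg (hw i)]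
  exact mul_le_mul_of_nonneg_right (hM _ (hv i)) (hw i)

lemma abs_rightDeriv_mul_le (hf : ConvexOn ℝ (Icc a b) f) {M : ℝ}
    (hM : ∀ y ∈ Icc a b, |f y| ≤ M) (hx : x ∈ Ioo a b) {t : ℝ}
    (hta : t ≤ 2 * (x - a)) (htb : t ≤ 2 * (b - x)) :
    |derivWithin f (Ioi x) x| * t ≤ 4 * M := by
  have hx' : x ∈ interior (Icc a b) := by rwa [interior_Icc]
  have ha : a ∈ Icc a b := ⟨le_rfl, hx.1.le.trans hx.2.le⟩
  have hb : b ∈ Icc a b := ⟨hx.1.le.trans hx.2.le, le_rfl⟩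
  have hla := hf.add_rightDeriv_mul_sub_le hx' ha
  have hlb := hf.add_rightDeriv_mul_sub_le hx' hb
  have hMa := abs_le.1 (hM a ha)
  have hMb := abs_le.1 (hM b hb)
  have hMx := abs_le.1 (hM x (Ioo_subset_Icc_self hx))
  rcases abs_cases (derivWithin f (Ioi x) x) with ⟨he, hσ⟩ | ⟨he, hσ⟩ <;> rw [he] <;> nlinarith

lemma map_midpoint_mul_le_integral (hf : ConvexOn ℝ (Icc a b) f) (hab : a < b) :
    f ((a + b) / 2) * (b - a) ≤ ∫ u in a..b, f u := by
  have hm : (a + b) / 2 ∈ interior (Icc a b) := by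
    rw [interior_Icc]; constructor <;> linarith
  set σ := derivWithin f (Ioi ((a + b) / 2)) ((a + b) / 2)
  calc f ((a + b) / 2) * (b - a) = ∫ u in a..b, (f ((a + b) / 2) + σ * (u - (a + b) / 2)) := by
        rw [intervalIntegral.integral_add intervalIntegrable_const
            ((Continuous.intervalIntegrable (by fun_prop) _ _)),
          intervalIntegral.integral_const_mul,
          intervalIntegral.integral_comp_sub_right (fun u => u), integral_id,
          intervalIntegral.integral_const, smul_eq_mul]
        ring
    _ ≤ ∫ u in a..b, f u := by
        refine intervalIntegral.integral_mono_on hab.le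
          (Continuous.intervalIntegrable (by fun_prop) _ _) ?_
          fun u hu => hf.add_rightDeriv_mul_sub_le hm hu
        exact (intervalIntegrable_iff_integrableOn_Icc_of_le hab.le).2 hf.integrableOn_Icc

lemma tsum_map_mul_le_of_hasSum_rightDeriv {ι : Type*} {w u v : ι → ℝ} (hf : ConvexOn ℝ S f)
    (hw : ∀ i, 0 ≤ w i) (hu : ∀ i, u i ∈ interior S) (hv : ∀ i, v i ∈ S)
    (hfu : Summable fun i => f (u i) * w i) (hfv : Summable fun i => f (v i) * w i)
    (hzero : HasSum (fun i => derivWithin f (Ioi (u i)) (u i) * (v i - u i) * w i) 0) :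
    ∑' i, f (u i) * w i ≤ ∑' i, f (v i) * w i := by
  have hlow := hfu.hasSum.add hzero
  rw [add_zero] at hlow
  refine hasSum_le (fun i => ?_) hlow hfv.hasSum
  rw [← add_mul]
  exact mul_le_mul_of_nonneg_right (hf.add_rightDeriv_mul_sub_le (hu i) (hv i)) (hw i)

lemma tsum_map_midpoint_mul_le_integral {ι : Type*} [Countable ι] {c w : ι → ℝ}
    (hf : ConvexOn ℝ (Icc a b) f) (hw : ∀ i, 0 < w i) (hc : ∀ i, a ≤ c i)
    (hcw : ∀ i, c i + w i ≤ b) (hdisj : Pairwise (Disjoint on fun i => Ioc (c i) (c i + w i)))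
    (hsum : HasSum w (b - a)) :
    ∑' i, f (c i + w i / 2) * w i ≤ ∫ u in a..b, f u := by
  have hsub : ∀ i, Icc (c i) (c i + w i) ⊆ Icc a b := fun i =>
    Icc_subset_Icc (hc i) (hcw i)
  have hab : a ≤ b := sub_nonneg.1 (hsum.nonneg fun i => (hw i).le)
  have hterm : ∀ i, f (c i + w i / 2) * w i ≤ ∫ u in Ioc (c i) (c i + w i), f u := by
    intro i
    have := (hf.subset (hsub i) (convex_Icc _ _)).map_midpoint_mul_le_integral
      (lt_add_of_pos_right _ (hw i))
    rwa [intervalIntegral.integral_of_le (by linarith [hw i]), add_sub_cancel_left,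
      show (c i + (c i + w i)) / 2 = c i + w i / 2 by ring] at this
  have hunion : HasSum (fun i => ∫ u in Ioc (c i) (c i + w i), f u)
      (∫ u in ⋃ i, Ioc (c i) (c i + w i), f u) :=
    hasSum_integral_iUnion (fun _ => measurableSet_Ioc) hdisj
      (hf.integrableOn_Icc.mono_set (iUnion_subset fun i => Ioc_subset_Icc_self.trans (hsub i)))
  have hfill : (⋃ i, Ioc (c i) (c i + w i)) =ᵐ[volume] Ioc a b := by
    refine ae_eq_of_subset_of_measure_ge
      (iUnion_subset fun i => Ioc_subset_Ioc (hc i) (hcw i)) ?_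
      (MeasurableSet.iUnion fun _ => measurableSet_Ioc).nullMeasurableSet measure_Ioc_lt_top.ne
    simp only [measure_iUnion hdisj fun _ => measurableSet_Ioc, Real.volume_Ioc,
      add_sub_cancel_left]
    rw [← ENNReal.ofReal_tsum_of_nonneg (fun i => (hw i).le) hsum.summable, hsum.tsum_eq]
  have hsummable : Summable fun i => f (c i + w i / 2) * w i :=
    hf.summable_map_mul (fun i => hsub i ⟨by linarith [hw i], by linarith [hw i]⟩)
      (fun i => (hw i).le) hsum.summable
  calc ∑' i, f (c i + w i / 2) * w i ≤ ∑' i, ∫ u in Ioc (c i) (c i + w i), f u :=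
        hsummable.tsum_le_tsum hterm hunion.summable
    _ = ∫ u in a..b, f u := by
        rw [hunion.tsum_eq, setIntegral_congr_set hfill, intervalIntegral.integral_of_le hab]

end ConvexOn

section Mass

variable {𝒳 : Type*} {p : 𝒳 → ℝ} {s t : Set 𝒳}

noncomputable def mass (p : 𝒳 → ℝ) (s : Set 𝒳) : ℝ := ∑' y, s.indicator p y

lemma tsum_ite_eq_mass (P : 𝒳 → Prop) [DecidablePred P] :
    (∑' y, if P y then p y else 0) = mass p {y | P y} := by
  simp only [mass, indicator_apply, mem_ofPred_eq]

lemma mass_singleton (x : 𝒳) : mass p {x} = p x := by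
  rw [mass, ← tsum_subtype, tsum_singleton]

lemma mass_nonneg (hp : ∀ x, 0 ≤ p x) : 0 ≤ mass p s :=
  tsum_nonneg <| indicator_nonneg fun x _ => hp x

lemma mass_mono (hp : ∀ x, 0 ≤ p x) (hps : Summable p) (hst : s ⊆ t) : mass p s ≤ mass p t :=
  (hps.indicator s).tsum_le_tsum (indicator_le_indicator_of_subset hst fun x => hp x)
    (hps.indicator t)

lemma mass_union (hps : Summable p) (hst : Disjoint s t) :
    mass p (s ∪ t) = mass p s + mass p t := by
  rw [mass, indicator_union_of_disjoint hst]
  exact (hps.indicator s).tsum_add (hps.indicator t)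

lemma mass_le_one (hp : ∀ x, 0 ≤ p x) (hp1 : HasSum p 1) : mass p s ≤ 1 := by
  simpa [mass, hp1.tsum_eq] using mass_mono hp hp1.summable (subset_univ s)

lemma hasSum_mul_mass_sub_mass (hp : ∀ x, 0 ≤ p x) (hps : Summable p) {r : 𝒳 → 𝒳 → Prop}
    {g : 𝒳 → ℝ} (hg : ∀ x y, r x y → g x = g y)
    (hsum : Summable fun x => |g x| * p x * mass p {y | r x y}) :
    HasSum (fun x => g x * p x * (mass p {y | r x y} - mass p {y | r y x})) 0 := by
  set F : 𝒳 × 𝒳 → ℝ := fun q => g q.1 * p q.1 * {y | r q.1 y}.indicator p q.2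
  have hrow : ∀ x, HasSum (fun y => F (x, y)) (g x * p x * mass p {y | r x y}) := fun x =>
    (hps.indicator _).hasSum.mul_left _
  have hcol : ∀ y, HasSum (fun x => F (x, y)) (g y * p y * mass p {x | r x y}) := by
    intro y
    refine ((hps.indicator {x | r x y}).hasSum.mul_left (g y * p y)).congr_fun fun x => ?_
    by_cases hxy : r x y
    · simp only [F, indicator_of_mem (show y ∈ {y | r x y} from hxy),
        indicator_of_mem (show x ∈ {x | r x y} from hxy), hg x y hxy]
      ring
    · simp only [F, indicator_of_notMem (show y ∉ {y | r x y} from hxy),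
        indicator_of_notMem (show x ∉ {x | r x y} from hxy), mul_zero]
  have hF : Summable F := by
    refine Summable.of_abs ((summable_prod_of_nonneg fun _ => abs_nonneg _).2
      ⟨fun x => (hrow x).summable.abs, hsum.congr fun x => ?_⟩)
    simp only [F, abs_mul, abs_of_nonneg (hp _),
      abs_of_nonneg (indicator_nonneg (fun y _ => hp y) _)]
    rw [tsum_mul_left, mass]
  have hrows := hF.hasSum.prod_fiberwise hrow
  have hcols := ((Equiv.prodComm 𝒳 𝒳).hasSum_iff.2 hF.hasSum).prod_fiberwise hcol
  simpa only [mul_sub, sub_self] using hrows.sub hcols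

end Mass

section MidPValue

variable {𝒳 : Type*} {p : 𝒳 → ℝ} {T S : 𝒳 → ℝ}

noncomputable def midPValue (p T : 𝒳 → ℝ) (x : 𝒳) : ℝ :=
  mass p {y | T x < T y} + mass p {y | T y = T x} / 2

lemma midPValue_congr {x y : 𝒳} (h : T x = T y) : midPValue p T x = midPValue p T y := by
  simp only [midPValue, h]

lemma le_mass_level (hp : ∀ x, 0 ≤ p x) (hps : Summable p) (x : 𝒳) :
    p x ≤ mass p {y | T y = T x} := by
  rw [← mass_singleton (p := p) x]
  exact mass_mono hp hps fun y hy => by rw [mem_singleton_iff.1 hy]; rfl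

lemma mass_level_le_two_mul_midPValue (hp : ∀ x, 0 ≤ p x) (x : 𝒳) :
    mass p {y | T y = T x} ≤ 2 * midPValue p T x := by
  have := mass_nonneg (s := {y | T x < T y}) hp
  rw [midPValue]; linarith

lemma mass_level_le_two_mul_one_sub_midPValue (hp : ∀ x, 0 ≤ p x) (hp1 : HasSum p 1) (x : 𝒳) :
    mass p {y | T y = T x} ≤ 2 * (1 - midPValue p T x) := by
  have hdisj : Disjoint {y | T x < T y} {y | T y = T x} :=
    disjoint_left.2 fun y hlt heq => (ne_of_lt hlt) (Eq.symm heq)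
  have := mass_le_one hp hp1 (s := {y | T x < T y} ∪ {y | T y = T x})
  rw [mass_union hp1.summable hdisj] at this
  rw [midPValue]; linarith

lemma midPValue_mem_Ioo (hp : ∀ x, 0 < p x) (hp1 : HasSum p 1) (x : 𝒳) :
    midPValue p T x ∈ Ioo 0 1 := by
  have hlevel := le_mass_level (T := T) (fun x => (hp x).le) hp1.summable x
  have h0 := mass_level_le_two_mul_midPValue (T := T) (fun x => (hp x).le) x
  have h1 := mass_level_le_two_mul_one_sub_midPValue (T := T) (fun x => (hp x).le) hp1 x
  constructor <;> linarith [hp x]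

lemma midPValue_sub_midPValue (hps : Summable p) (hTS : ∀ x y, T x < T y → S x < S y)
    (x : 𝒳) :
    midPValue p S x - midPValue p T x =
      (mass p {y | T y = T x ∧ S x < S y} - mass p {y | T x = T y ∧ S y < S x}) / 2 := by
  have hx := hTS x
  have hupper : {y | S x < S y} = {y | T x < T y} ∪ {y | T y = T x ∧ S x < S y} := by
    ext y; have hy := hTS y x; simp only [mem_union, mem_ofPred_eq]; grind
  have hlevelS : {y | S y = S x} = {y | T y = T x ∧ S y = S x} := by
    ext y; have hy := hTS y x; simp only [mem_ofPred_eq]; grind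
  have hlevelT : {y | T y = T x} = ({y | T x = T y ∧ S y < S x} ∪
      {y | T y = T x ∧ S y = S x}) ∪ {y | T y = T x ∧ S x < S y} := by
    ext y; simp only [mem_union, mem_ofPred_eq]; grind
  rw [midPValue, midPValue, hupper, hlevelS, hlevelT, mass_union hps, mass_union hps,
    mass_union hps]
  · ring
  all_goals simp only [disjoint_left, mem_union, mem_ofPred_eq]; grind

theorem tsum_map_midPValue_le_of_lt_imp_lt (hp : ∀ x, 0 < p x) (hp1 : HasSum p 1)
    (hTS : ∀ x y, T x < T y → S x < S y) {f : ℝ → ℝ} (hf : ConvexOn ℝ (Icc 0 1) f) :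
    ∑' x, f (midPValue p T x) * p x ≤ ∑' x, f (midPValue p S x) * p x := by
  have hp0 : ∀ x, 0 ≤ p x := fun x => (hp x).le
  have hmem : ∀ U x, midPValue p U x ∈ Ioo 0 1 := fun _ => midPValue_mem_Ioo hp hp1
  obtain ⟨M, hM⟩ := hf.exists_forall_abs_le
  set σ : 𝒳 → ℝ := fun x => derivWithin f (Ioi (midPValue p T x)) (midPValue p T x)
  have hσ : ∀ x, |σ x| * p x * mass p {y | T y = T x ∧ S x < S y} ≤ 4 * M * p x := by
    intro x
    have hσx : |σ x| * mass p {y | T y = T x} ≤ 4 * M :=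
      hf.abs_rightDeriv_mul_le hM (hmem T x)
        (by linarith [mass_level_le_two_mul_midPValue (T := T) hp0 x])
        (by linarith [mass_level_le_two_mul_one_sub_midPValue (T := T) hp0 hp1 x])
    have hle : mass p {y | T y = T x ∧ S x < S y} ≤ mass p {y | T y = T x} :=
      mass_mono hp0 hp1.summable fun y hy => hy.1
    calc |σ x| * p x * mass p {y | T y = T x ∧ S x < S y}
        ≤ |σ x| * mass p {y | T y = T x} * p x := by
          rw [mul_right_comm]
          exact mul_le_mul_of_nonneg_right (mul_le_mul_of_nonneg_left hle (abs_nonneg _)) (hp0 x)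
      _ ≤ 4 * M * p x := mul_le_mul_of_nonneg_right hσx (hp0 x)
  have hzero := hasSum_mul_mass_sub_mass hp0 hp1.summable (g := σ)
    (r := fun x y => T y = T x ∧ S x < S y)
    (fun x y hxy => by simp only [σ, midPValue_congr hxy.1.symm])
    (Summable.of_nonneg_of_le
      (fun x => mul_nonneg (mul_nonneg (abs_nonneg _) (hp0 x)) (mass_nonneg hp0))
      hσ (hp1.summable.mul_left (4 * M)))
  refine hf.tsum_map_mul_le_of_hasSum_rightDeriv hp0
    (fun x => by rw [interior_Icc]; exact hmem T x) (fun x => Ioo_subset_Icc_self (hmem S x))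
    (hf.summable_map_mul (fun x => Ioo_subset_Icc_self (hmem T x)) hp0 hp1.summable)
    (hf.summable_map_mul (fun x => Ioo_subset_Icc_self (hmem S x)) hp0 hp1.summable) ?_
  refine (zero_div (2 : ℝ) ▸ hzero.div_const 2).congr_fun fun x => ?_
  rw [midPValue_sub_midPValue hp1.summable hTS]
  ring

lemma mass_upper_add_eq (hps : Summable p) (x : 𝒳) :
    mass p {y | S x < S y} + p x = mass p ({y | S x < S y} ∪ {x}) := by
  rw [mass_union hps (disjoint_singleton_right.2 (lt_irrefl (S x))), mass_singleton]

lemma mass_upper_add_le (hp : ∀ x, 0 ≤ p x) (hps : Summable p) {x y : 𝒳} (hxy : S x < S y) :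
    mass p {z | S y < S z} + p y ≤ mass p {z | S x < S z} := by
  rw [mass_upper_add_eq hps]
  exact mass_mono hp hps (union_subset (fun z hz => hxy.trans hz) (singleton_subset_iff.2 hxy))

theorem tsum_map_midPValue_le_integral [Countable 𝒳] (hp : ∀ x, 0 < p x) (hp1 : HasSum p 1)
    (hS : Injective S) {f : ℝ → ℝ} (hf : ConvexOn ℝ (Icc 0 1) f) :
    ∑' x, f (midPValue p S x) * p x ≤ ∫ u in (0 : ℝ)..1, f u := by
  have hp0 : ∀ x, 0 ≤ p x := fun x => (hp x).le
  have hmid : ∀ x, midPValue p S x = mass p {y | S x < S y} + p x / 2 := fun x => by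
    rw [midPValue, show {y | S y = S x} = {x} from ext fun y => hS.eq_iff, mass_singleton]
  simp only [hmid]
  refine hf.tsum_map_midpoint_mul_le_integral hp (fun x => mass_nonneg hp0)
    (fun x => mass_upper_add_eq hp1.summable x ▸ mass_le_one hp0 hp1) (fun x y hxy => ?_)
    (by rwa [sub_zero])
  rcases (hS.ne hxy).lt_or_gt with h | h
  · exact (Ioc_disjoint_Ioc_of_le (mass_upper_add_le hp0 hp1.summable h)).symm
  · exact Ioc_disjoint_Ioc_of_le (mass_upper_add_le hp0 hp1.summable h)

end MidPValue

theorem stmt_15_general {𝒳 : Type*} [Countable 𝒳] {Θ : Type*}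
    (p : Θ → 𝒳 → ℝ) (hpsum : ∀ θ, ∑' x, p θ x = 1)
    (θ₀ : Θ) (p₀ : 𝒳 → ℝ) (hnull : p θ₀ = p₀)
    (hp₀pos : ∀ x, 0 < p₀ x)
    (T : 𝒳 → ℝ) (R : 𝒳 → ℕ) (hRinj : Function.Injective R)
    (hagree : ∀ x y, T x > T y → R x < R y)
    (QT QMD : 𝒳 → ℝ)
    (hQT : ∀ x, QT x = (∑' y, if T x < T y then p₀ y else 0)
      + (1/2) * ∑' y, if T y = T x then p₀ y else 0)
    (hQMD : ∀ x, QMD x = (∑' y, if R y < R x then p₀ y else 0)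
      + (1/2) * ∑' y, if R y = R x then p₀ y else 0) :
    ∀ h : ℝ → ℝ, ConvexOn ℝ (Set.Icc (0:ℝ) 1) h →
      (∑' x, h (QT x) * p₀ x ≤ ∑' x, h (QMD x) * p₀ x)
        ∧ ∑' x, h (QMD x) * p₀ x ≤ ∫ u in (0:ℝ)..1, h u := by
  intro h hh
  have htotal : ∑' x, p₀ x = 1 := hnull ▸ hpsum θ₀
  have hp₀ : HasSum p₀ 1 := htotal ▸ Summable.hasSum (by_contra fun hns => by
    rw [tsum_eq_zero_of_not_summable hns] at htotal; exact zero_ne_one htotal)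
  have hQT' : QT = midPValue p₀ T := funext fun x => by
    rw [hQT, tsum_ite_eq_mass, tsum_ite_eq_mass, midPValue]; ring
  have hQMD' : QMD = midPValue p₀ (fun y => -(R y : ℝ)) := funext fun x => by
    rw [hQMD, tsum_ite_eq_mass, tsum_ite_eq_mass, midPValue]
    simp only [neg_lt_neg_iff, neg_inj, Nat.cast_lt, Nat.cast_inj]
    ring
  subst hQT' hQMD'
  exact ⟨tsum_map_midPValue_le_of_lt_imp_lt hp₀pos hp₀
      (fun x y hxy => neg_lt_neg (Nat.cast_lt.2 (hagree y x hxy))) hh,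
    tsum_map_midPValue_le_integral hp₀pos hp₀
      (neg_injective.comp (Nat.cast_injective.comp hRinj)) hh⟩

/-- If `R` is injective and agrees with `T`, `p₀ > 0` everywhere,
and `T` is sufficient for the family, then for every convex `h : [0,1] → ℝ`,
`Σ_x h(Q^T(x))p₀(x) ≤ Σ_x h(Q^{MD}(x))p₀(x) ≤ ∫₀¹ h(u) du`: under the null the
mid-p-value based on `T` is dominated in the convex order by the MD
mid-p-value, which in turn is dominated in the convex order by a uniform
random variable. -/
theorem stmt_15 {𝒳 : Type*} [Countable 𝒳] {Θ : Type*}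
    (p : Θ → 𝒳 → ℝ) (hp : ∀ θ x, 0 ≤ p θ x) (hpsum : ∀ θ, ∑' x, p θ x = 1)
    (θ₀ : Θ) (p₀ : 𝒳 → ℝ) (hnull : p θ₀ = p₀)
    (hp₀pos : ∀ x, 0 < p₀ x)
    (T : 𝒳 → ℝ) (R : 𝒳 → ℕ) (hRinj : Function.Injective R)
    (hagree : ∀ x y, T x > T y → R x < R y)
    (hsuff : ∀ (θ : Θ) (x : 𝒳),
      p θ x * (∑' y, if T y = T x then p₀ y else 0)
        = p₀ x * ∑' y, if T y = T x then p θ y else 0)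
    (QT QMD : 𝒳 → ℝ)
    (hQT : ∀ x, QT x = (∑' y, if T x < T y then p₀ y else 0)
      + (1/2) * ∑' y, if T y = T x then p₀ y else 0)
    (hQMD : ∀ x, QMD x = (∑' y, if R y < R x then p₀ y else 0)
      + (1/2) * ∑' y, if R y = R x then p₀ y else 0) :
    ∀ h : ℝ → ℝ, ConvexOn ℝ (Set.Icc (0:ℝ) 1) h →
      (∑' x, h (QT x) * p₀ x ≤ ∑' x, h (QMD x) * p₀ x)
        ∧ ∑' x, h (QMD x) * p₀ x ≤ ∫ u in (0:ℝ)..1, h u :=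
  stmt_15_general p hpsum θ₀ p₀ hnull hp₀pos T R hRinj hagree QT QMD hQT hQMD
end
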